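/- Let P ⊆ (2^ℕ)^ω be a perfect product, m < ω, σ₀ ∈ 2^m, and let B ⊆ P_{σ₀} be a perfect product. Then there is a perfect product Q with Q ≤ₘ P and Q_{σ₀} = B. Explicitly, one may take Q(j) = B(j) ∪ ⋃{(P(j))_s : s ∈ 2^{q(m,j)}, s ≠ σ₀/j} for j in the φ-image of m, and Q(j) = B(j) otherwise. -/
import Mathlib


/-- Cantor space `2^ℕ`. -/
abbrev Cantor := ℕ → Bool

/-- A perfect subset of Cantor space: nonempty, closed, no isolated points. -/
def PerfectSet (X : Set Cantor) : Prop := X.Nonempty ∧ Perfect X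

/-- The length of the stem of `X`: the length of the longest finite binary string
that is an initial segment of every element of `X`. -/
noncomputable def stemLen (X : Set Cantor) : ℕ :=
  sSup {n | ∀ x ∈ X, ∀ y ∈ X, ∀ i < n, x i = y i}

/-- Simple splitting piece `X^i = {x ∈ X | x(|stem X|) = i}`. -/
noncomputable def splitPiece (X : Set Cantor) (i : Bool) : Set Cantor :=
  {x ∈ X | x (stemLen X) = i}

/-- Iterated simple splitting `X_s`: `X_Λ = X`, `X_{s⌢i} = (X_s)^i`. -/
noncomputable def iterSplit (X : Set Cantor) (s : List Bool) : Set Cantor :=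
  s.foldl splitPiece X

/-- Refinement `X ≤ₙ Y`: `X_s ⊆ Y_s` for every binary string `s` of length `n`. -/
def refines (n : ℕ) (X Y : Set Cantor) : Prop :=
  ∀ s : List Bool, s.length = n → iterSplit X s ⊆ iterSplit Y s

/-- The perfect product `∏_k P(k) ⊆ (2^ℕ)^ω` determined by coordinatewise sets. -/
def prodSet (P : ℕ → Set Cantor) : Set (ℕ → Cantor) := {x | ∀ k, x k ∈ P k}

/-- `P` is a perfect product (given by its coordinates `P k`). -/
def PerfectProduct (P : ℕ → Set Cantor) : Prop := ∀ k, PerfectSet (P k)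

/-- `q(m,j) = |{k < m : φ(k) = j}|`. -/
def qcount (phi : ℕ → ℕ) (m j : ℕ) : ℕ :=
  ((Finset.range m).filter fun k => phi k = j).card

/-- `σ/j`: the substring of `σ` read along the positions `k < |σ|` with `φ(k) = j`. -/
def subAlong (phi : ℕ → ℕ) (j : ℕ) (σ : List Bool) : List Bool :=
  ((List.range σ.length).filter fun k => phi k = j).map fun k => σ.getD k false

/-- The split piece `P_σ` of a perfect product, coordinatewise: `P_σ(j) = (P(j))_{σ/j}`. -/
noncomputable def prodSplit (phi : ℕ → ℕ) (P : ℕ → Set Cantor) (σ : List Bool) :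
    ℕ → Set Cantor :=
  fun j => iterSplit (P j) (subAlong phi j σ)

/-- Refinement of perfect products: `P ≤ₘ Q` iff `P(j) ≤_{q(m,j)} Q(j)` for all `j`. -/
def prodRef (phi : ℕ → ℕ) (m : ℕ) (P Q : ℕ → Set Cantor) : Prop :=
  ∀ j, refines (qcount phi m j) (P j) (Q j)

/-- `D(σ,τ) = ω \ {φ(i) : i < m, σ(i) ≠ τ(i)}` (for strings of length `m`). -/
def Dset (phi : ℕ → ℕ) (m : ℕ) (σ τ : List Bool) : Set ℕ :=
  {j | ¬ ∃ i < m, σ.getD i false ≠ τ.getD i false ∧ phi i = j}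


section Aux

lemma iterSplit_cons (X : Set Cantor) (a : Bool) (s : List Bool) :
    iterSplit X (a :: s) = iterSplit (splitPiece X a) s := rfl

lemma mem_splitPiece {X : Set Cantor} {i : Bool} {x : Cantor} :
    x ∈ splitPiece X i ↔ x ∈ X ∧ x (stemLen X) = i := Iff.rfl

lemma splitPiece_subset (X : Set Cantor) (i : Bool) : splitPiece X i ⊆ X :=
  fun _ hx => hx.1

lemma iterSplit_subset (s : List Bool) : ∀ X : Set Cantor, iterSplit X s ⊆ X := by
  induction s with
  | nil => exact fun X _ h => h
  | cons a s ih => exact fun X => (ih _).trans (splitPiece_subset X a)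

lemma PerfectSet.exists_pair {X : Set Cantor} (hX : PerfectSet X) :
    ∃ x ∈ X, ∃ y ∈ X, x ≠ y := by
  obtain ⟨x, hx⟩ := hX.1
  have h := hX.2.acc x hx
  rw [accPt_iff_nhds] at h
  obtain ⟨y, ⟨-, hy⟩, hne⟩ := h Set.univ Filter.univ_mem
  exact ⟨y, hy, x, hx, hne⟩

lemma stem_spec {X : Set Cantor} (hX : PerfectSet X) :
    (∀ x ∈ X, ∀ y ∈ X, ∀ i < stemLen X, x i = y i) ∧
    ∃ x ∈ X, ∃ y ∈ X, x (stemLen X) ≠ y (stemLen X) := by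
  obtain ⟨a, ha, b, hb, hab⟩ := hX.exists_pair
  obtain ⟨i₀, hi₀⟩ : ∃ i, a i ≠ b i := by
    by_contra h; push_neg at h; exact hab (funext h)
  set S := {n | ∀ x ∈ X, ∀ y ∈ X, ∀ i < n, x i = y i} with hS
  have hub : ∀ n ∈ S, n ≤ i₀ := by
    intro n hn
    by_contra h; push_neg at h
    exact hi₀ (hn a ha b hb i₀ h)
  have h0 : (0:ℕ) ∈ S := fun x _ y _ i hi => absurd hi (Nat.not_lt_zero i)
  have hmem : stemLen X ∈ S := Nat.sSup_mem ⟨0, h0⟩ ⟨i₀, hub⟩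
  refine ⟨hmem, ?_⟩
  have hnot : stemLen X + 1 ∉ S := by
    intro h
    have h2 : stemLen X + 1 ≤ stemLen X := le_csSup ⟨i₀, hub⟩ h
    omega
  rw [hS, Set.mem_setOf_eq] at hnot
  push_neg at hnot
  obtain ⟨x, hx, y, hy, i, hi, hne⟩ := hnot
  have : i = stemLen X := by
    by_contra h
    exact hne (hmem x hx y hy i (by omega))
  exact ⟨x, hx, y, hy, this ▸ hne⟩

lemma splitPiece_perfect {X : Set Cantor} (hX : PerfectSet X) (i : Bool) :
    PerfectSet (splitPiece X i) := by
  obtain ⟨hagree, x, hx, y, hy, hxy⟩ := stem_spec hX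
  have hopen : IsOpen {w : Cantor | w (stemLen X) = i} := by
    have : {w : Cantor | w (stemLen X) = i} = (fun w : Cantor => w (stemLen X)) ⁻¹' {i} := by
      ext w; simp
    rw [this]
    exact (isOpen_discrete _).preimage (continuous_apply _)
  have hclosed : IsClosed {w : Cantor | w (stemLen X) = i} := by
    have : {w : Cantor | w (stemLen X) = i} = (fun w : Cantor => w (stemLen X)) ⁻¹' {i} := by
      ext w; simp
    rw [this]
    exact (isClosed_discrete _).preimage (continuous_apply _)
  refine ⟨?_, ?_, ?_⟩
  · have : x (stemLen X) = i ∨ y (stemLen X) = i := by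
      cases i <;> cases hx' : x (stemLen X) <;> cases hy' : y (stemLen X) <;> simp_all
    rcases this with h | h
    · exact ⟨x, hx, h⟩
    · exact ⟨y, hy, h⟩
  · have : splitPiece X i = X ∩ {w : Cantor | w (stemLen X) = i} := rfl
    rw [this]
    exact hX.2.closed.inter hclosed
  · intro z hz
    rw [accPt_iff_nhds]
    intro U hU
    have h2 := hX.2.acc z hz.1
    rw [accPt_iff_nhds] at h2
    obtain ⟨w, ⟨⟨hwU, hwN⟩, hwX⟩, hwz⟩ :=
      h2 (U ∩ {w : Cantor | w (stemLen X) = i})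
        (Filter.inter_mem hU (hopen.mem_nhds hz.2))
    exact ⟨w, ⟨hwU, hwX, hwN⟩, hwz⟩

lemma iterSplit_perfect (s : List Bool) :
    ∀ X : Set Cantor, PerfectSet X → PerfectSet (iterSplit X s) := by
  induction s with
  | nil => exact fun X hX => hX
  | cons a s ih => exact fun X hX => ih _ (splitPiece_perfect hX a)

lemma iterSplit_cover (n : ℕ) : ∀ X : Set Cantor,
    (⋃ u ∈ {u : List Bool | u.length = n}, iterSplit X u) = X := by
  induction n with
  | zero =>
    intro X
    ext x
    simp only [Set.mem_iUnion, Set.mem_setOf_eq, exists_prop, List.length_eq_zero_iff]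
    constructor
    · rintro ⟨u, rfl, hx⟩; exact hx
    · intro hx; exact ⟨[], rfl, hx⟩
  | succ n ih =>
    intro X
    ext x
    simp only [Set.mem_iUnion, Set.mem_setOf_eq, exists_prop]
    constructor
    · rintro ⟨u, hlen, hx⟩; exact iterSplit_subset u X hx
    · intro hx
      have hx' : x ∈ splitPiece X (x (stemLen X)) := ⟨hx, rfl⟩
      rw [← ih (splitPiece X (x (stemLen X)))] at hx'
      simp only [Set.mem_iUnion, Set.mem_setOf_eq, exists_prop] at hx'
      obtain ⟨u', hu', hxu⟩ := hx'
      exact ⟨x (stemLen X) :: u', by simp [hu'], hxu⟩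

lemma stemLen_eq_of {X Y : Set Cantor} (hXY : X ⊆ Y)
    (hagree : ∀ x ∈ Y, ∀ y ∈ Y, ∀ i < stemLen Y, x i = y i)
    {p q : Cantor} (hp : p ∈ X) (hq : q ∈ X) (hpq : p (stemLen Y) ≠ q (stemLen Y)) :
    stemLen X = stemLen Y := by
  have hmem : stemLen Y ∈ {n | ∀ x ∈ X, ∀ y ∈ X, ∀ i < n, x i = y i} :=
    fun x hx y hy i hi => hagree x (hXY hx) y (hXY hy) i hi
  have hub : ∀ n ∈ {n | ∀ x ∈ X, ∀ y ∈ X, ∀ i < n, x i = y i}, n ≤ stemLen Y := by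
    intro n hn
    by_contra h; push_neg at h
    exact hpq (hn p hp q hq (stemLen Y) h)
  exact le_antisymm (csSup_le ⟨stemLen Y, hmem⟩ hub) (le_csSup ⟨stemLen Y, hub⟩ hmem)

lemma key_lemma : ∀ (n : ℕ) (Y : Set Cantor), PerfectSet Y → ∀ (t : List Bool), t.length = n →
    ∀ (A : Set Cantor), A.Nonempty → A ⊆ iterSplit Y t →
    ∀ s : List Bool, s.length = n →
    iterSplit (A ∪ ⋃ u ∈ {u : List Bool | u.length = n ∧ u ≠ t}, iterSplit Y u) s
      = if s = t then A else iterSplit Y s := by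
  intro n
  induction n with
  | zero =>
    intro Y hY t ht A hA hAY s hs
    have ht0 : t = [] := List.length_eq_zero_iff.mp ht
    have hs0 : s = [] := List.length_eq_zero_iff.mp hs
    subst ht0; subst hs0
    have hempty : (⋃ u ∈ {u : List Bool | u.length = 0 ∧ u ≠ ([] : List Bool)},
        iterSplit Y u) = ∅ := by
      ext x
      simp only [Set.mem_iUnion, Set.mem_setOf_eq, exists_prop, Set.mem_empty_iff_false,
        iff_false, not_exists, not_and]
      intro u ⟨hlen, hne⟩
      exact absurd (List.length_eq_zero_iff.mp hlen) hne
    rw [hempty, Set.union_empty]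
    simp [iterSplit]
  | succ n ih =>
    intro Y hY t ht A hA hAY s hs
    obtain ⟨i₀, t', rfl⟩ : ∃ b u, t = b :: u := by
      cases t with
      | nil => simp at ht
      | cons b u => exact ⟨b, u, rfl⟩
    obtain ⟨a, s', rfl⟩ : ∃ b u, s = b :: u := by
      cases s with
      | nil => simp at hs
      | cons b u => exact ⟨b, u, rfl⟩
    have ht' : t'.length = n := by simpa using ht
    have hs' : s'.length = n := by simpa using hs
    set X' : Set Cantor :=
      A ∪ ⋃ u ∈ {u : List Bool | u.length = n ∧ u ≠ t'}, iterSplit (splitPiece Y i₀) u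
      with hX'def
    have hAY' : A ⊆ iterSplit (splitPiece Y i₀) t' := hAY
    have hX'sub : X' ⊆ splitPiece Y i₀ := by
      rintro x (hx | hx)
      · exact iterSplit_subset t' _ (hAY' hx)
      · simp only [Set.mem_iUnion, Set.mem_setOf_eq, exists_prop] at hx
        obtain ⟨u, _, hxu⟩ := hx
        exact iterSplit_subset u _ hxu
    have hXeq : (A ∪ ⋃ u ∈ {u : List Bool | u.length = n + 1 ∧ u ≠ i₀ :: t'},
        iterSplit Y u) = splitPiece Y (!i₀) ∪ X' := by
      ext x
      simp only [hX'def, Set.mem_union, Set.mem_iUnion, Set.mem_setOf_eq, exists_prop]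
      constructor
      · rintro (hxA | ⟨u, ⟨hlen, hne⟩, hxu⟩)
        · exact Or.inr (Or.inl hxA)
        · obtain ⟨b, u', rfl⟩ : ∃ b v, u = b :: v := by
            cases u with
            | nil => simp at hlen
            | cons b v => exact ⟨b, v, rfl⟩
          have hu' : u'.length = n := by simpa using hlen
          by_cases hb : b = i₀
          · subst hb
            have hne' : u' ≠ t' := fun h => hne (by rw [h])
            exact Or.inr (Or.inr ⟨u', ⟨hu', hne'⟩, hxu⟩)
          · have hb' : b = !i₀ := Bool.eq_not_iff.mpr hb
            subst hb'
            exact Or.inl (iterSplit_subset u' _ hxu)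
      · rintro (hx | hxA | ⟨u, ⟨hlen, hne⟩, hxu⟩)
        · rw [← iterSplit_cover n (splitPiece Y (!i₀))] at hx
          simp only [Set.mem_iUnion, Set.mem_setOf_eq, exists_prop] at hx
          obtain ⟨u', hu', hxu⟩ := hx
          refine Or.inr ⟨(!i₀) :: u', ⟨by simp [hu'], ?_⟩, hxu⟩
          simp
        · exact Or.inl hxA
        · exact Or.inr ⟨i₀ :: u, ⟨by simp [hlen], by simp [hne]⟩, hxu⟩
    rw [hXeq]
    have hperf_i := splitPiece_perfect hY i₀
    have hperf_ni := splitPiece_perfect hY (!i₀)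
    obtain ⟨p, hp⟩ := hA
    have hpY : p ∈ splitPiece Y i₀ := iterSplit_subset t' _ (hAY' hp)
    obtain ⟨q, hq⟩ := hperf_ni.1
    have hpX : p ∈ splitPiece Y (!i₀) ∪ X' := Or.inr (Or.inl hp)
    have hqX : q ∈ splitPiece Y (!i₀) ∪ X' := Or.inl hq
    have hsubY : splitPiece Y (!i₀) ∪ X' ⊆ Y := by
      rintro x (hx | hx)
      · exact hx.1
      · exact (hX'sub hx).1
    have hstem : stemLen (splitPiece Y (!i₀) ∪ X') = stemLen Y := by
      refine stemLen_eq_of hsubY (stem_spec hY).1 hpX hqX ?_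
      rw [hpY.2, hq.2]
      simp
    have hsp : ∀ b : Bool, splitPiece (splitPiece Y (!i₀) ∪ X') b
        = if b = i₀ then X' else splitPiece Y (!i₀) := by
      intro b
      ext x
      rw [mem_splitPiece, hstem]
      by_cases hb : b = i₀
      · subst hb
        rw [if_pos rfl]
        constructor
        · rintro ⟨hx | hx, hxN⟩
          · exfalso
            rw [hx.2] at hxN
            exact Bool.not_ne_self _ hxN
          · exact hx
        · intro hx
          exact ⟨Or.inr hx, (hX'sub hx).2⟩
      · have hb' : b = !i₀ := Bool.eq_not_iff.mpr hb
        subst hb'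
        rw [if_neg hb]
        constructor
        · rintro ⟨hx | hx, hxN⟩
          · exact hx
          · exfalso
            rw [(hX'sub hx).2] at hxN
            exact hb hxN.symm
        · intro hx
          exact ⟨Or.inl hx, hx.2⟩
    rw [iterSplit_cons, hsp a]
    by_cases ha : a = i₀
    · subst ha
      rw [if_pos rfl]
      rw [ih (splitPiece Y a) (splitPiece_perfect hY a) t' ht' A ⟨p, hp⟩ hAY' s' hs']
      by_cases h : s' = t'
      · subst h; rw [if_pos rfl, if_pos rfl]
      · rw [if_neg h, if_neg (by simp [h]), iterSplit_cons]
    · rw [if_neg ha]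
      have hne : (a :: s') ≠ (i₀ :: t') := by simp [ha]
      rw [if_neg hne]
      have ha' : a = !i₀ := Bool.eq_not_iff.mpr ha
      rw [iterSplit_cons, ha']

lemma subAlong_length (phi : ℕ → ℕ) (j m : ℕ) (σ : List Bool) (h : σ.length = m) :
    (subAlong phi j σ).length = qcount phi m j := by
  subst h
  rw [subAlong, List.length_map, qcount, Finset.card, Finset.filter_val, Finset.range_val,
    Multiset.range, Multiset.filter_coe, Multiset.coe_card]

end Aux

/-- given a perfect product `B ⊆ P_{σ₀}`, the explicit perfect product
`Q(j) = B(j) ∪ ⋃{(P(j))_s : s ∈ 2^{q(m,j)}, s ≠ σ₀/j}` satisfies `Q ≤ₘ P` and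
`Q_{σ₀} = B` (for `j` outside the `φ`-image of `m` this gives `Q(j) = B(j)`). -/
theorem stmt7 (phi : ℕ → ℕ) (hphi : ∀ j, {k | phi k = j}.Infinite)
    (P : ℕ → Set Cantor) (hP : PerfectProduct P) (m : ℕ)
    (σ₀ : List Bool) (hσ₀ : σ₀.length = m)
    (B : ℕ → Set Cantor) (hB : PerfectProduct B)
    (hBP : ∀ j, B j ⊆ prodSplit phi P σ₀ j) :
    PerfectProduct (fun j => B j ∪
      ⋃ s ∈ {s : List Bool | s.length = qcount phi m j ∧ s ≠ subAlong phi j σ₀},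
        iterSplit (P j) s) ∧
    prodRef phi m (fun j => B j ∪
      ⋃ s ∈ {s : List Bool | s.length = qcount phi m j ∧ s ≠ subAlong phi j σ₀},
        iterSplit (P j) s) P ∧
    prodSplit phi (fun j => B j ∪
      ⋃ s ∈ {s : List Bool | s.length = qcount phi m j ∧ s ≠ subAlong phi j σ₀},
        iterSplit (P j) s) σ₀ = B := by
  have hlen : ∀ j, (subAlong phi j σ₀).length = qcount phi m j :=
    fun j => subAlong_length phi j m σ₀ hσ₀
  have hkey : ∀ j, ∀ s : List Bool, s.length = qcount phi m j →
      iterSplit (B j ∪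
        ⋃ s ∈ {s : List Bool | s.length = qcount phi m j ∧ s ≠ subAlong phi j σ₀},
          iterSplit (P j) s) s
      = if s = subAlong phi j σ₀ then B j else iterSplit (P j) s := by
    intro j s hs
    exact key_lemma (qcount phi m j) (P j) (hP j) _ (hlen j) (B j) (hB j).1 (hBP j) s hs
  refine ⟨?_, ?_, ?_⟩
  · intro j
    refine ⟨(hB j).1.mono Set.subset_union_left, ?_, ?_⟩
    · refine IsClosed.union (hB j).2.closed ?_
      refine Set.Finite.isClosed_biUnion ?_ ?_
      · exact (List.finite_length_eq Bool (qcount phi m j)).subset (fun s hs => hs.1)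
      · intro s _
        exact (iterSplit_perfect s (P j) (hP j)).2.closed
    · intro x hx
      rcases hx with hx | hx
      · exact ((hB j).2.acc x hx).mono (Filter.principal_mono.mpr Set.subset_union_left)
      · simp only [Set.mem_iUnion, Set.mem_setOf_eq, exists_prop] at hx
        obtain ⟨s, hsmem, hxs⟩ := hx
        refine ((iterSplit_perfect s (P j) (hP j)).2.acc x hxs).mono
          (Filter.principal_mono.mpr ?_)
        intro y hy
        right
        simp only [Set.mem_iUnion, Set.mem_setOf_eq, exists_prop]
        exact ⟨s, hsmem, hy⟩
  · intro j s hs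
    rw [hkey j s hs]
    by_cases h : s = subAlong phi j σ₀
    · subst h
      rw [if_pos rfl]
      exact hBP j
    · rw [if_neg h]
  · funext j
    show iterSplit _ (subAlong phi j σ₀) = B j
    rw [hkey j _ (hlen j), if_pos rfl]
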